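/- Let c : ℕ → ℝ≥0, n ≥ 2, Δ(n) a minimizer of c(d)/(d-2) over d ∈ {3,...,n}, and suppose q(n) = (n-2)/(Δ(n)-2) is an integer. Then there exists a tree T with n pendent vertices, all of whose internal vertices have degree Δ(n), and it satisfies Σ_{v∈V(T)} c(d_T(v)) = n·c(1) + (n-2)·c(Δ(n))/(Δ(n)-2). -/

import Mathlib

/-!
The Δ-tree is built explicitly, with k = Δ - 1 and q = (n - 2)/(Δ - 2) internal vertices: each
vertex w ≥ 1 of `{0, …, kq + 1}` is joined to a parent p(w) < w, which makes the graph a tree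
(connected through 0, and with one edge fewer than vertices). The parents are chosen so that 0
has the single child 1 and each of 1, …, q has exactly k children; hence 1, …, q have degree
k + 1 = Δ, the other (k - 1)q + 2 = n vertices are leaves, and the cost is n·c(1) + q·c(Δ).
-/

open scoped Classical
open Finset

lemma Fin.card_filter_val_eq_card_filter_range (m : ℕ) (P : ℕ → Prop) [DecidablePred P] :
    #{i : Fin m | P i} = #{w ∈ range m | P w} := by
  rw [← card_map Fin.valEmbedding, ← Nat.Iio_eq_range, ← Fin.map_valEmbedding_univ, filter_map]
  rfl

namespace SimpleGraph

def parentGraph (p : ℕ → ℕ) (m : ℕ) : SimpleGraph (Fin m) :=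
  fromRel fun v w => (v : ℕ) ≠ 0 ∧ p v = w

section parentGraph

variable {p : ℕ → ℕ} {m : ℕ}

lemma parentGraph_adj {v w : Fin m} :
    (parentGraph p m).Adj v w ↔ v ≠ w ∧ ((v : ℕ) ≠ 0 ∧ p v = w ∨ (w : ℕ) ≠ 0 ∧ p w = v) :=
  fromRel_adj ..

variable (hp : ∀ w, w ≠ 0 → p w < w)
include hp

lemma parentGraph_reachable_zero (w : Fin m) : (parentGraph p m).Reachable ⟨0, w.pos⟩ w := by
  obtain ⟨w, hw⟩ := w
  induction w using Nat.strong_induction_on with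
  | _ w ih =>
    rcases eq_or_ne w 0 with rfl | hw0
    · rfl
    · have hpw := hp w hw0
      refine (ih _ hpw (hpw.trans hw)).trans (Adj.reachable ?_)
      rw [parentGraph_adj]
      exact ⟨fun h => hpw.ne (Fin.val_eq_of_eq h), Or.inr ⟨hw0, rfl⟩⟩

lemma parentGraph_connected [NeZero m] : (parentGraph p m).Connected :=
  (connected_iff_exists_forall_reachable _).2 ⟨0, parentGraph_reachable_zero hp⟩

/-- `w ↦ s(w, p w)` is a bijection from the nonzero vertices onto the edges. -/
lemma parentGraph_card_edgeSet [NeZero m] : Nat.card (parentGraph p m).edgeSet = m - 1 := by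
  have hadj (w : Fin m) (hw : (w : ℕ) ≠ 0) :
      (parentGraph p m).Adj w ⟨p w, (hp w hw).trans w.isLt⟩ :=
    parentGraph_adj.2 ⟨fun h => (hp w hw).ne' (Fin.val_eq_of_eq h), Or.inl ⟨hw, rfl⟩⟩
  let f (w : {w : Fin m // (w : ℕ) ≠ 0}) : (parentGraph p m).edgeSet :=
    ⟨s(w, ⟨p w, (hp w w.2).trans w.1.isLt⟩), hadj w w.2⟩
  have hf : Function.Bijective f := by
    constructor
    · rintro ⟨w, hw⟩ ⟨w', hw'⟩ h
      have h := congrArg Subtype.val h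
      simp only [f, Sym2.eq_iff, Fin.ext_iff] at h
      have := hp w hw
      have := hp w' hw'
      exact Subtype.ext (Fin.ext (show (w : ℕ) = w' by omega))
    · rintro ⟨e, he⟩
      induction e using Sym2.inductionOn with
      | hf v w =>
        rcases (parentGraph_adj.1 he).2 with ⟨hv, hvw⟩ | ⟨hw, hwv⟩
        · exact ⟨⟨v, hv⟩, Subtype.ext (congrArg (s(v, ·)) (Fin.ext hvw))⟩
        · exact ⟨⟨w, hw⟩, Subtype.ext ((congrArg (s(w, ·)) (Fin.ext hwv)).trans Sym2.eq_swap)⟩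
  rw [← Nat.card_eq_of_bijective f hf, Nat.card_eq_fintype_card, Fintype.card_subtype,
    Fin.card_filter_val_eq_card_filter_range m (· ≠ 0), filter_ne',
    card_erase_of_mem (by simp [NeZero.pos]), card_range]

lemma parentGraph_isTree [NeZero m] : (parentGraph p m).IsTree := by
  rw [isTree_iff_connected_and_card, parentGraph_card_edgeSet hp, Nat.card_eq_fintype_card,
    Fintype.card_fin]
  exact ⟨parentGraph_connected hp, Nat.sub_add_cancel NeZero.one_le⟩

lemma parentGraph_degree (v : Fin m) :
    (parentGraph p m).degree v =
      (if (v : ℕ) = 0 then 0 else 1) + #{w ∈ range m | w ≠ 0 ∧ p w = v} := by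
  have hneighbor : (parentGraph p m).neighborFinset v =
      ({w | (v : ℕ) ≠ 0 ∧ p v = w ∨ (w : ℕ) ≠ 0 ∧ p w = v} : Finset (Fin m)) := by
    ext w
    simp only [mem_neighborFinset, parentGraph_adj, mem_filter_univ, and_iff_right_iff_imp]
    rintro (⟨hv, hvw⟩ | ⟨hw, hwv⟩) rfl
    exacts [(hp _ hv).ne hvw, (hp _ hw).ne hwv]
  have hparent : #{w ∈ range m | (v : ℕ) ≠ 0 ∧ p v = w} = if (v : ℕ) = 0 then 0 else 1 := by
    split_ifs with hv
    · simp [hv]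
    · rw [card_eq_one]
      refine ⟨p v, ext fun w => ?_⟩
      have := hp v hv
      simp only [mem_filter, mem_range, mem_singleton]
      omega
  rw [← card_neighborFinset_eq_degree, hneighbor,
    Fin.card_filter_val_eq_card_filter_range m (fun w => (v : ℕ) ≠ 0 ∧ p v = w ∨ w ≠ 0 ∧ p w = v),
    filter_or, card_union_of_disjoint, hparent]
  refine disjoint_filter.2 fun w _ ⟨hv, hvw⟩ ⟨hw, hwv⟩ => ?_
  have := hp v hv
  have := hp w hw
  omega

end parentGraph

/-- On the vertices `0, …, k * q + 1`, each `w ≠ 0` gets the parent `⌈(w - 1) / k⌉`: the root `0`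
is a leaf with the single child `1`, and each `v ∈ {1, …, q}` has the `k` children
`k * (v - 1) + 2, …, k * v + 1`. -/
def deltaTree (k q : ℕ) : SimpleGraph (Fin (k * q + 2)) :=
  parentGraph (fun w => (w + k - 2) / k) (k * q + 2)

section deltaTree

variable {k : ℕ} (q : ℕ) (hk : 0 < k)
include hk

lemma deltaTree_parent_lt (w : ℕ) (hw : w ≠ 0) : (w + k - 2) / k < w := by
  obtain ⟨w, rfl⟩ := Nat.exists_eq_add_one_of_ne_zero hw
  obtain ⟨k, rfl⟩ := Nat.exists_eq_add_one_of_ne_zero hk.ne'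
  rw [Nat.div_lt_iff_lt_mul hk]
  ring_nf
  omega

lemma deltaTree_isTree : (deltaTree k q).IsTree :=
  parentGraph_isTree (deltaTree_parent_lt hk)

lemma deltaTree_parent_eq_iff {v w : ℕ} (hv : v ≠ 0) :
    w ≠ 0 ∧ (w + k - 2) / k = v ↔ k * v + 2 ≤ w + k ∧ w < k * v + 2 := by
  have : k ≤ k * v := Nat.le_mul_of_pos_right k (Nat.pos_of_ne_zero hv)
  rw [Nat.div_eq_iff hk, mul_comm v]
  omega

lemma deltaTree_card_children {v : ℕ} (hv : v ≠ 0) :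
    #{w ∈ range (k * q + 2) | w ≠ 0 ∧ (w + k - 2) / k = v} = if v ≤ q then k else 0 := by
  simp only [deltaTree_parent_eq_iff hk hv]
  have hkv : k ≤ k * v := Nat.le_mul_of_pos_right k (Nat.pos_of_ne_zero hv)
  split_ifs with hvq
  · have : k * v ≤ k * q := Nat.mul_le_mul_left k hvq
    have hchildren : ({w ∈ range (k * q + 2) | k * v + 2 ≤ w + k ∧ w < k * v + 2} : Finset ℕ) =
        Ico (k * v + 2 - k) (k * v + 2) := by
      ext w
      simp only [mem_filter, mem_range, mem_Ico]
      omega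
    rw [hchildren, Nat.card_Ico]
    omega
  · have : k * q + k ≤ k * v := by
      rw [← Nat.mul_succ]
      exact Nat.mul_le_mul_left k (by omega)
    rw [card_eq_zero, filter_eq_empty_iff]
    intro w hw
    simp only [mem_range] at hw
    omega

lemma deltaTree_degree (v : Fin (k * q + 2)) :
    (deltaTree k q).degree v = if 1 ≤ (v : ℕ) ∧ (v : ℕ) ≤ q then k + 1 else 1 := by
  rw [deltaTree, parentGraph_degree (deltaTree_parent_lt hk)]
  rcases eq_or_ne (v : ℕ) 0 with hv | hv
  · have hroot : ({w ∈ range (k * q + 2) | w ≠ 0 ∧ (w + k - 2) / k = v} : Finset ℕ) = {1} := by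
      ext w
      simp only [mem_filter, mem_range, mem_singleton, hv, Nat.div_eq_zero_iff, hk.ne',
        false_or]
      omega
    rw [hroot]
    simp [hv]
  · rw [deltaTree_card_children q hk hv]
    split_ifs <;> omega

lemma deltaTree_card_internal : #{v : Fin (k * q + 2) | 1 ≤ (v : ℕ) ∧ (v : ℕ) ≤ q} = q := by
  have : q ≤ k * q := Nat.le_mul_of_pos_left q hk
  have hIcc : ({w ∈ range (k * q + 2) | 1 ≤ w ∧ w ≤ q} : Finset ℕ) = Icc 1 q := by
    ext w
    simp only [mem_filter, mem_range, mem_Icc]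
    omega
  rw [Fin.card_filter_val_eq_card_filter_range (k * q + 2) (fun w => 1 ≤ w ∧ w ≤ q), hIcc,
    Nat.card_Icc, Nat.add_sub_cancel]

lemma deltaTree_card_not_internal :
    #{v : Fin (k * q + 2) | ¬(1 ≤ (v : ℕ) ∧ (v : ℕ) ≤ q)} = (k - 1) * q + 2 := by
  have := card_filter_add_card_filter_not (s := univ)
    (fun v : Fin (k * q + 2) => 1 ≤ (v : ℕ) ∧ (v : ℕ) ≤ q)
  rw [deltaTree_card_internal q hk, card_univ, Fintype.card_fin] at this
  rw [Nat.sub_one_mul]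
  have : q ≤ k * q := Nat.le_mul_of_pos_left q hk
  omega

lemma deltaTree_card_leaves : #{v | (deltaTree k q).degree v = 1} = (k - 1) * q + 2 := by
  rw [← deltaTree_card_not_internal q hk]
  congr 1
  ext v
  simp only [mem_filter_univ, deltaTree_degree q hk]
  split_ifs with h <;> simp [h, hk.ne']

lemma deltaTree_sum_degree {M : Type*} [AddCommMonoid M] (f : ℕ → M) :
    ∑ v, f ((deltaTree k q).degree v) = ((k - 1) * q + 2) • f 1 + q • f (k + 1) := by
  simp only [deltaTree_degree q hk, apply_ite f]
  rw [sum_ite, sum_const, sum_const, deltaTree_card_internal q hk,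
    deltaTree_card_not_internal q hk, add_comm]

end deltaTree

end SimpleGraph

theorem stmt_7_general (n : ℕ) (hn : 2 ≤ n) (c : ℕ → ℝ)
    (Δ : ℕ) (hΔ3 : 3 ≤ Δ)
    (hdvd : (Δ - 2) ∣ (n - 2)) :
    ∃ (m : ℕ) (G : SimpleGraph (Fin m)),
      G.IsTree ∧ (Finset.univ.filter fun v => G.degree v = 1).card = n ∧
      (∀ v, G.degree v ≠ 1 → G.degree v = Δ) ∧
      ∑ v, c (G.degree v) = (n : ℝ) * c 1 + ((n : ℝ) - 2) * (c Δ / ((Δ : ℝ) - 2)) := by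
  obtain ⟨q, hq⟩ := hdvd
  have hk : 0 < Δ - 1 := by omega
  have hleaves : (Δ - 1 - 1) * q + 2 = n := by
    rw [show Δ - 1 - 1 = Δ - 2 by omega]
    omega
  have hqΔ : ((n : ℝ) - 2) = ((Δ : ℝ) - 2) * q := by
    have := congrArg (Nat.cast (R := ℝ)) hq
    rwa [Nat.cast_sub hn, Nat.cast_mul, Nat.cast_sub (by omega : 2 ≤ Δ)] at this
  refine ⟨_, SimpleGraph.deltaTree (Δ - 1) q, SimpleGraph.deltaTree_isTree q hk, ?_,
    fun v hv => ?_, ?_⟩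
  · rw [SimpleGraph.deltaTree_card_leaves q hk, hleaves]
  · rw [SimpleGraph.deltaTree_degree q hk] at hv ⊢
    split_ifs at hv ⊢ <;> omega
  · have hden : (Δ : ℝ) - 2 ≠ 0 := by
      have : (3 : ℝ) ≤ Δ := by exact_mod_cast hΔ3
      linarith
    rw [SimpleGraph.deltaTree_sum_degree q hk, hleaves, Nat.sub_add_cancel (by omega : 1 ≤ Δ),
      nsmul_eq_mul, nsmul_eq_mul, hqΔ]
    field_simp

/-- If `Δ` minimizes `c(d)/(d-2)` over `d ∈ {3, ..., n}` (with `Δ = 3` when `n = 2`) and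
`(Δ-2) ∣ (n-2)`, then there exists a tree with `n` pendent vertices all of whose internal
vertices have degree `Δ`, and its cost is `n·c(1) + (n-2)·c(Δ)/(Δ-2)`. -/
theorem stmt_7 (n : ℕ) (hn : 2 ≤ n) (c : ℕ → ℝ) (hc : ∀ k, 0 ≤ c k)
    (Δ : ℕ) (hΔ3 : 3 ≤ Δ) (hΔ2 : n = 2 → Δ = 3) (hΔn : 2 < n → Δ ≤ n)
    (hmin : ∀ d : ℕ, 3 ≤ d → d ≤ n → c Δ / ((Δ : ℝ) - 2) ≤ c d / ((d : ℝ) - 2))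
    (hdvd : (Δ - 2) ∣ (n - 2)) :
    ∃ (m : ℕ) (G : SimpleGraph (Fin m)),
      G.IsTree ∧ (Finset.univ.filter fun v => G.degree v = 1).card = n ∧
      (∀ v, G.degree v ≠ 1 → G.degree v = Δ) ∧
      ∑ v, c (G.degree v) = (n : ℝ) * c 1 + ((n : ℝ) - 2) * (c Δ / ((Δ : ℝ) - 2)) :=
  stmt_7_general n hn c Δ hΔ3 hdvd
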